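/- For every real β > 1, the function t ↦ (∑_{n=1}^∞ n^{-β} t^{α(n)})^{-1} belongs to L²(𝕋^ω, dt) (and hence to L¹(𝕋^ω, dt)). -/

import Mathlib

open MeasureTheory Filter Finset

noncomputable section

instance : MeasurableSpace Circle := borel Circle
instance : BorelSpace Circle := ⟨rfl⟩

/-- The infinite-dimensional torus `𝕋^ω`, a countable product of unit circles. -/
abbrev Torus : Type := ℕ → Circle

/-- `pprime j` is the `j`-th prime (`0`-indexed, so `pprime 0 = 2`). -/
def pprime (j : ℕ) : ℕ := Nat.nth Nat.Prime j

/-- `expOf n j` is `α_j(n)`, the exponent of the `j`-th prime in the factorization of `n`. -/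
def expOf (n j : ℕ) : ℕ := n.factorization (pprime j)

/-- `tpow t n = t^{α(n)} = ∏_j t_j^{α_j(n)}`, a finite product. -/
def tpow (t : Torus) (n : ℕ) : ℂ := ∏ᶠ j, ((t j : ℂ) ^ expOf n j)

/-!
Since `n ↦ t^{α(n)}` is completely multiplicative and unimodular, the reciprocal of
`∑ n^{-β} t^{α(n)}` is the Möbius-twisted series `∑ μ(n) n^{-β} t^{α(n)}`. This series converges
uniformly in `t`, so it is a continuous function bounded by `ζ(β)`, and a bounded measurable
function lies in every `Lᵖ` of a finite measure.
-/

open LSeries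
open scoped LSeries.notation ArithmeticFunction.Moebius

lemma LSeries_ofReal_eq_tsum (f : ℕ → ℂ) (β : ℝ) :
    LSeries f β = ∑' n : ℕ, f (n + 1) / Complex.ofReal (((n : ℝ) + 1) ^ β) := by
  have hsupp : Function.support (term f β) ⊆ Set.range Nat.succ := fun n hn ↦
    ⟨n - 1, Nat.succ_pred_eq_of_ne_zero (by rintro rfl; exact hn (term_zero f β))⟩
  rw [LSeries, ← Nat.succ_injective.tsum_eq hsupp]
  refine tsum_congr fun n ↦ ?_
  rw [term_of_ne_zero n.succ_ne_zero, Complex.ofReal_cpow (by positivity)]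
  push_cast
  rfl

lemma LSeries.mul_convolution_mul_of_map_mul {f : ℕ → ℂ}
    (hf : ∀ {m n}, m ≠ 0 → n ≠ 0 → f (m * n) = f m * f n) (g h : ℕ → ℂ) :
    (f * g) ⍟ (f * h) = f * (g ⍟ h) := by
  ext n
  simp only [Pi.mul_apply, convolution_def, Finset.mul_sum]
  refine Finset.sum_congr rfl fun p hp ↦ ?_
  obtain ⟨hp₁, hp₂⟩ := Nat.ne_zero_of_mem_divisorsAntidiagonal hp
  rw [← (Nat.mem_divisorsAntidiagonal.mp hp).1, hf hp₁ hp₂]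
  ring

lemma LSeries.convolution_mul_moebius_of_map_mul {f : ℕ → ℂ} (h₁ : f 1 = 1)
    (hf : ∀ {m n}, m ≠ 0 → n ≠ 0 → f (m * n) = f m * f n) :
    f ⍟ (f * ↗μ) = δ := by
  have hζμ : (1 : ℕ → ℂ) ⍟ ↗μ = δ := by
    rw [one_convolution_eq_zeta_convolution, ← ArithmeticFunction.one_eq_delta]
    simp_rw [← ArithmeticFunction.natCoe_apply, ← ArithmeticFunction.intCoe_apply,
      ArithmeticFunction.coe_mul, ArithmeticFunction.coe_zeta_mul_coe_moebius]
  simpa only [mul_one, hζμ, mul_delta h₁] using mul_convolution_mul_of_map_mul hf 1 ↗μ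

lemma LSeries_mul_LSeries_mul_moebius {f : ℕ → ℂ} (h₁ : f 1 = 1)
    (hf : ∀ {m n}, m ≠ 0 → n ≠ 0 → f (m * n) = f m * f n) {s : ℂ}
    (hfs : LSeriesSummable f s) (hfμs : LSeriesSummable (f * ↗μ) s) :
    LSeries f s * LSeries (f * ↗μ) s = 1 := by
  rw [← LSeries_convolution' hfs hfμs, convolution_mul_moebius_of_map_mul h₁ hf, LSeries_delta,
    Pi.one_apply]

lemma norm_LSeries_le_of_norm_le {f g : ℕ → ℂ} {s : ℂ} (hfg : ∀ n, ‖f n‖ ≤ ‖g n‖)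
    (hg : LSeriesSummable g s) : ‖LSeries f s‖ ≤ ∑' n, ‖term g s n‖ := by
  have hle : ∀ n, ‖term f s n‖ ≤ ‖term g s n‖ := fun n ↦ norm_term_le s (hfg n)
  have hfs : Summable fun n ↦ ‖term f s n‖ := hg.norm.of_nonneg_of_le (fun _ ↦ norm_nonneg _) hle
  exact (norm_tsum_le_tsum_norm hfs).trans (hfs.tsum_le_tsum hle hg.norm)

section Parametric

variable {X : Type*} [TopologicalSpace X] {f : X → ℕ → ℂ} {g : ℕ → ℂ} {s : ℂ}

lemma continuous_LSeries_of_norm_le (hc : ∀ n, Continuous (f · n))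
    (hfg : ∀ x n, ‖f x n‖ ≤ ‖g n‖) (hg : LSeriesSummable g s) :
    Continuous fun x ↦ LSeries (f x) s := by
  refine continuous_tsum (fun n ↦ ?_) hg.norm fun n x ↦ norm_term_le s (hfg x n)
  rcases eq_or_ne n 0 with rfl | hn
  · simpa only [term_zero] using continuous_const
  · simpa only [term_of_ne_zero hn] using (hc n).div_const _

lemma memLp_LSeries_of_norm_le [MeasurableSpace X] [OpensMeasurableSpace X] {ν : Measure X}
    [IsFiniteMeasure ν] (hc : ∀ n, Continuous (f · n)) (hfg : ∀ x n, ‖f x n‖ ≤ ‖g n‖)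
    (hg : LSeriesSummable g s) (p : ENNReal) :
    MemLp (fun x ↦ LSeries (f x) s) p ν :=
  .of_bound (continuous_LSeries_of_norm_le hc hfg hg).aestronglyMeasurable _
    (ae_of_all _ fun x ↦ norm_LSeries_le_of_norm_le (hfg x) hg)

end Parametric

lemma expOf_eq_zero_of_lt {n j : ℕ} (h : n < j) : expOf n j = 0 :=
  Nat.factorization_eq_zero_of_lt <|
    h.trans_le (Nat.nth_strictMono Nat.infinite_setOfPred_prime).le_apply

lemma mulSupport_tpow_subset (t : Torus) (n : ℕ) :
    Function.mulSupport (fun j ↦ (t j : ℂ) ^ expOf n j) ⊆ ↑(range (n + 1)) := by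
  intro j hj
  simp only [coe_range, Set.mem_Iio]
  by_contra! hjn
  exact hj (by simp [expOf_eq_zero_of_lt hjn])

lemma tpow_eq_prod_range (t : Torus) (n : ℕ) :
    tpow t n = ∏ j ∈ range (n + 1), (t j : ℂ) ^ expOf n j :=
  finprod_eq_prod_of_mulSupport_subset _ (mulSupport_tpow_subset t n)

lemma tpow_one (t : Torus) : tpow t 1 = 1 := by
  simp [tpow, expOf]

lemma tpow_mul (t : Torus) {m n : ℕ} (hm : m ≠ 0) (hn : n ≠ 0) :
    tpow t (m * n) = tpow t m * tpow t n := by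
  have hfin (k : ℕ) := (range (k + 1)).finite_toSet.subset (mulSupport_tpow_subset t k)
  rw [tpow, tpow, tpow, ← finprod_mul_distrib (hfin m) (hfin n)]
  simp only [expOf, Nat.factorization_mul hm hn, Finsupp.add_apply, pow_add]

lemma norm_tpow (t : Torus) (n : ℕ) : ‖tpow t n‖ = 1 := by
  simp [tpow_eq_prod_range, norm_prod, norm_pow, Circle.norm_coe]

lemma continuous_tpow (n : ℕ) : Continuous fun t : Torus ↦ tpow t n := by
  simp only [tpow_eq_prod_range]
  fun_prop

lemma norm_tpow_mul_moebius_le (t : Torus) (n : ℕ) : ‖(tpow t * ↗μ) n‖ ≤ 1 := by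
  rw [Pi.mul_apply, norm_mul, norm_tpow, one_mul, Complex.norm_intCast]
  exact_mod_cast ArithmeticFunction.abs_moebius_le_one

theorem inv_zeta_series_memLp_two_general (β : ℝ) (hβ : 1 < β)
    (ν : Measure Torus) [IsProbabilityMeasure ν] :
    MemLp (fun t : Torus =>
      (∑' n : ℕ, tpow t (n + 1) / (Complex.ofReal (((n : ℝ) + 1) ^ β)))⁻¹) 2 ν ∧
    MemLp (fun t : Torus =>
      (∑' n : ℕ, tpow t (n + 1) / (Complex.ofReal (((n : ℝ) + 1) ^ β)))⁻¹) 1 ν := by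
  have hsummable {f : ℕ → ℂ} (hf : ∀ n, ‖f n‖ ≤ 1) : LSeriesSummable f β :=
    LSeriesSummable_of_bounded_of_one_lt_real (fun n _ ↦ hf n) hβ
  have hinv (t : Torus) : (∑' n : ℕ, tpow t (n + 1) / Complex.ofReal (((n : ℝ) + 1) ^ β))⁻¹ =
      LSeries (tpow t * ↗μ) β := by
    rw [← LSeries_ofReal_eq_tsum]
    exact inv_eq_of_mul_eq_one_right <| LSeries_mul_LSeries_mul_moebius (tpow_one t)
      (tpow_mul t) (hsummable (fun n ↦ (norm_tpow t n).le))
      (hsummable (norm_tpow_mul_moebius_le t))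
  have hmemLp := memLp_LSeries_of_norm_le (ν := ν) (g := 1) (s := β)
    (fun n ↦ (continuous_tpow n).mul continuous_const)
    (fun t n ↦ (norm_tpow_mul_moebius_le t n).trans (by simp)) (hsummable fun _ ↦ by simp)
  simp only [hinv]
  exact ⟨hmemLp 2, hmemLp 1⟩

/-- For every real `β > 1`, the function `t ↦ (∑_{n=1}^∞ n^{-β} t^{α(n)})⁻¹` belongs to
`L²(𝕋^ω, dt)` (and hence to `L¹(𝕋^ω, dt)`), where `dt` is the normalized Haar measure. -/
theorem inv_zeta_series_memLp_two (β : ℝ) (hβ : 1 < β)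
    (ν : Measure Torus) [ν.IsHaarMeasure] [IsProbabilityMeasure ν] :
    MemLp (fun t : Torus =>
      (∑' n : ℕ, tpow t (n + 1) / (Complex.ofReal (((n : ℝ) + 1) ^ β)))⁻¹) 2 ν ∧
    MemLp (fun t : Torus =>
      (∑' n : ℕ, tpow t (n + 1) / (Complex.ofReal (((n : ℝ) + 1) ^ β)))⁻¹) 1 ν :=
  inv_zeta_series_memLp_two_general β hβ ν
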